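/- Let Ω_B = {X ∈ ℝ^{n₁×n₂} : rank(X) ≤ r, ‖X‖_{r,0} ≤ s₁, ‖Xᵀ‖_{r,0} ≤ s₂, ‖X‖_F ≤ 1}, the set of rank-≤r matrices with at most s₁ nonzero rows and s₂ nonzero columns in the Frobenius unit ball (r ≤ min(s₁,s₂)). Then the upper Minkowski dimension of Ω_B is at most (s₁ + s₂ − r)r. -/

import Mathlib

/-!
A matrix `X` of rank `k ≤ r` whose nonzero rows lie in `R` and nonzero columns in `J` factors as
`X = C * W`, where `C` consists of `k` linearly independent columns of `X` and `W` is the identity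
on those columns. Choosing the columns to maximise a determinant, as in Auerbach's lemma, puts
every entry of `W` in `[-1, 1]`, and the entries of `C` are bounded by `‖X‖ ≤ 1`. Hence `X` is the
image of a point of a cube of dimension `|R| k + k (|J| - k) ≤ (s₁ + s₂ - r) r` under a polynomial,
so Lipschitz, map. The set is therefore a finite union of Lipschitz images of cubes of dimension
at most `(s₁ + s₂ - r) r`, and each of them is covered by `O(ρ ^ (-(s₁ + s₂ - r) r))` balls of
radius `ρ`.
-/

noncomputable def coveringNumber {E : Type*} [PseudoMetricSpace E] (Ω : Set E) (ρ : ℝ) : ℕ :=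
  sInf {k : ℕ | ∃ C : Finset E, C.card = k ∧ Ω ⊆ ⋃ c ∈ C, Metric.closedBall c ρ}

/-- The upper Minkowski (box-counting) dimension. -/
noncomputable def upperMinkowskiDim {E : Type*} [PseudoMetricSpace E] (Ω : Set E) : ℝ :=
  Filter.limsup (fun ρ : ℝ => Real.log (coveringNumber Ω ρ) / Real.log (1 / ρ))
    (nhdsWithin 0 (Set.Ioi 0))

attribute [local instance] Matrix.frobeniusNormedAddCommGroup

open Finset Function
open Metric hiding coveringNumber
open scoped Matrix

section Covers

open Set Filter Topology
open scoped NNReal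

variable {E : Type*} [PseudoMetricSpace E]

def HasPolyCovers (Ω : Set E) (D : ℕ) : Prop :=
  ∃ A : ℝ, ∀ ρ ∈ Ioc (0 : ℝ) 1,
    ∃ C : Finset E, (#C : ℝ) ≤ A / ρ ^ D ∧ Ω ⊆ ⋃ c ∈ C, closedBall c ρ

theorem HasPolyCovers.subset {Ω Ω' : Set E} {D : ℕ} (h : HasPolyCovers Ω D) (hΩ : Ω' ⊆ Ω) :
    HasPolyCovers Ω' D :=
  h.imp fun _ hA ρ hρ => (hA ρ hρ).imp fun _ hC => ⟨hC.1, hΩ.trans hC.2⟩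

theorem HasPolyCovers.mono_exponent {Ω : Set E} {D D' : ℕ} (h : HasPolyCovers Ω D)
    (hD : D ≤ D') : HasPolyCovers Ω D' := by
  obtain ⟨A, hA⟩ := h
  refine ⟨max A 0, fun ρ hρ => (hA ρ hρ).imp fun C hC => ⟨?_, hC.2⟩⟩
  calc (#C : ℝ) ≤ A / ρ ^ D := hC.1
    _ ≤ max A 0 / ρ ^ D := div_le_div_of_nonneg_right (le_max_left _ _) (pow_pos hρ.1 _).le
    _ ≤ max A 0 / ρ ^ D' := div_le_div_of_nonneg_left (le_max_right _ _) (pow_pos hρ.1 _)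
      (pow_le_pow_of_le_one hρ.1.le hρ.2 hD)

theorem Finset.hasPolyCovers_biUnion {ι : Type*} (s : Finset ι) {Ω : ι → Set E} {D : ℕ}
    (h : ∀ i ∈ s, HasPolyCovers (Ω i) D) : HasPolyCovers (⋃ i ∈ s, Ω i) D := by
  classical
  choose! A hA using h
  refine ⟨∑ i ∈ s, A i, fun ρ hρ => ?_⟩
  choose! C hCcard hC using fun i hi => hA i hi ρ hρ
  refine ⟨s.biUnion C, ?_, iUnion₂_subset fun i hi => (hC i hi).trans ?_⟩
  · calc (#(s.biUnion C) : ℝ) ≤ ∑ i ∈ s, (#(C i) : ℝ) := mod_cast card_biUnion_le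
      _ ≤ ∑ i ∈ s, A i / ρ ^ D := sum_le_sum hCcard
      _ = (∑ i ∈ s, A i) / ρ ^ D := (sum_div ..).symm
  · exact biUnion_subset_biUnion_left fun c hc => mem_biUnion.2 ⟨i, hi, hc⟩

theorem coveringNumber_le_card {Ω : Set E} {ρ : ℝ} {C : Finset E}
    (h : Ω ⊆ ⋃ c ∈ C, closedBall c ρ) : coveringNumber Ω ρ ≤ #C :=
  Nat.sInf_le ⟨C, rfl, h⟩

theorem log_coveringNumber_le {Ω : Set E} {ρ B : ℝ} {D : ℕ} (hρ₀ : 0 < ρ) (hρ₁ : ρ ≤ 1)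
    (hB : 1 ≤ B) (h : (coveringNumber Ω ρ : ℝ) ≤ B / ρ ^ D) :
    Real.log (coveringNumber Ω ρ) ≤ Real.log B + D * Real.log (1 / ρ) := by
  rcases (Nat.cast_nonneg (α := ℝ) (coveringNumber Ω ρ)).eq_or_lt with h0 | hpos
  · rw [← h0, Real.log_zero]
    have := Real.log_nonneg ((one_le_div hρ₀).2 hρ₁)
    have := Real.log_nonneg hB
    positivity
  · calc Real.log (coveringNumber Ω ρ) ≤ Real.log (B / ρ ^ D) := Real.log_le_log hpos h
      _ = Real.log B + D * Real.log (1 / ρ) := by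
        rw [div_eq_mul_one_div, ← one_div_pow, Real.log_mul (by positivity) (by positivity),
          Real.log_pow]

theorem HasPolyCovers.upperMinkowskiDim_le {Ω : Set E} {D : ℕ} (h : HasPolyCovers Ω D) :
    upperMinkowskiDim Ω ≤ D := by
  obtain ⟨A, hA⟩ := h
  set B := max A 1
  have hbound : ∀ ρ ∈ Ioo (0 : ℝ) 1,
      Real.log (coveringNumber Ω ρ) / Real.log (1 / ρ) ≤ D + Real.log B / Real.log (1 / ρ) := by
    rintro ρ ⟨hρ₀, hρ₁⟩
    obtain ⟨C, hCcard, hC⟩ := hA ρ ⟨hρ₀, hρ₁.le⟩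
    have hN : (coveringNumber Ω ρ : ℝ) ≤ B / ρ ^ D :=
      calc (coveringNumber Ω ρ : ℝ) ≤ #C := mod_cast coveringNumber_le_card hC
        _ ≤ A / ρ ^ D := hCcard
        _ ≤ B / ρ ^ D := div_le_div_of_nonneg_right (le_max_left _ _) (by positivity)
    have hL : 0 < Real.log (1 / ρ) := Real.log_pos ((one_lt_div hρ₀).2 hρ₁)
    rw [div_le_iff₀ hL, add_mul, div_mul_cancel₀ _ hL.ne']
    linarith [log_coveringNumber_le hρ₀ hρ₁.le (le_max_right A 1) hN]
  have hlim : Tendsto (fun ρ => (D : ℝ) + Real.log B / Real.log (1 / ρ)) (𝓝[>] 0) (𝓝 D) := by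
    have : Tendsto (fun ρ : ℝ => Real.log (1 / ρ)) (𝓝[>] 0) atTop := by
      simpa only [one_div, Real.log_inv, comp_def] using
        tendsto_neg_atBot_atTop.comp Real.tendsto_log_nhdsGT_zero
    simpa using tendsto_const_nhds.add (tendsto_const_nhds.div_atTop this)
  have hIoo : Ioo (0 : ℝ) 1 ∈ 𝓝[>] (0 : ℝ) := Ioo_mem_nhdsGT one_pos
  rw [upperMinkowskiDim, ← hlim.limsup_eq]
  refine limsup_le_limsup (eventually_of_mem hIoo hbound) ?_ hlim.isBoundedUnder_le
  refine isCoboundedUnder_le_of_eventually_le (x := 0) _ (eventually_of_mem hIoo fun ρ hρ => ?_)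
  exact div_nonneg (Real.log_natCast_nonneg _) (Real.log_nonneg ((one_le_div hρ.1).2 hρ.2.le))

theorem exists_finset_cover_closedBall_pi (ι : Type*) [Fintype ι] {m : ℕ} (hm : 0 < m) :
    ∃ C : Finset (ι → ℝ), #C ≤ (2 * m + 1) ^ Fintype.card ι ∧
      (C : Set (ι → ℝ)) ⊆ closedBall 0 1 ∧
      closedBall (0 : ι → ℝ) 1 ⊆ ⋃ c ∈ C, closedBall c (1 / m) := by
  classical
  have hm' : (0 : ℝ) < m := Nat.cast_pos.2 hm
  refine ⟨(Fintype.piFinset fun _ => Icc (-m : ℤ) m).image fun z i => (z i : ℝ) / m, ?_, ?_, ?_⟩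
  · refine card_image_le.trans_eq ?_
    simp only [Fintype.card_piFinset, Int.card_Icc, prod_const, card_univ]
    congr 1
    omega
  · simp only [coe_image, image_subset_iff]
    intro z hz
    rw [Set.mem_preimage, mem_closedBall, dist_zero_right, pi_norm_le_iff_of_nonneg zero_le_one]
    intro i
    have hzi := Finset.mem_Icc.1 (Fintype.mem_piFinset.1 hz i)
    rw [Real.norm_eq_abs, abs_div, abs_of_pos hm', div_le_one hm', abs_le]
    exact_mod_cast hzi
  · intro p hp
    rw [mem_closedBall, dist_zero_right, pi_norm_le_iff_of_nonneg zero_le_one] at hp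
    refine mem_iUnion₂.2 ⟨fun i => (⌊p i * m⌋ : ℝ) / m,
      mem_image.2 ⟨fun i => ⌊p i * m⌋, Fintype.mem_piFinset.2 fun i => ?_, rfl⟩, ?_⟩
    · have hpi := abs_le.1 ((Real.norm_eq_abs _).symm.trans_le (hp i))
      rw [Finset.mem_Icc, Int.le_floor, Int.floor_le_iff]
      push_cast
      constructor <;> nlinarith
    · rw [mem_closedBall, dist_pi_le_iff (by positivity)]
      intro i
      have h₁ := Int.floor_le (p i * m)
      have h₂ := Int.lt_floor_add_one (p i * m)
      have : p i - ⌊p i * m⌋ / m = (p i * m - ⌊p i * m⌋) / m := by field_simp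
      rw [Real.dist_eq, this, abs_div, abs_of_pos hm', div_le_div_iff_of_pos_right hm', abs_le]
      constructor <;> linarith

theorem LipschitzOnWith.hasPolyCovers_image_closedBall {ι : Type*} [Fintype ι] {K : ℝ≥0}
    {φ : (ι → ℝ) → E} (hφ : LipschitzOnWith K φ (closedBall 0 1)) :
    HasPolyCovers (φ '' closedBall 0 1) (Fintype.card ι) := by
  classical
  refine ⟨(2 * K + 5) ^ Fintype.card ι, fun ρ hρ => ?_⟩
  obtain ⟨hρ₀, hρ₁⟩ := hρ
  set m := ⌈K / ρ⌉₊ + 1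
  have hm : (0 : ℝ) < m := Nat.cast_pos.2 (Nat.succ_pos _)
  have hKm : K ≤ m * ρ := (div_le_iff₀ hρ₀).1 ((Nat.le_ceil _).trans (by simp [m]))
  have hmK : m * ρ ≤ K + 2 * ρ := by
    have := (Nat.ceil_lt_add_one (by positivity : (0 : ℝ) ≤ K / ρ)).le
    have := mul_le_mul_of_nonneg_right this hρ₀.le
    rw [add_mul, div_mul_cancel₀ _ hρ₀.ne'] at this
    simp only [m, Nat.cast_add, Nat.cast_one]
    linarith
  obtain ⟨C, hCcard, hCball, hC⟩ :=
    exists_finset_cover_closedBall_pi ι (show 0 < m from Nat.succ_pos _)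
  refine ⟨C.image φ, ?_, ?_⟩
  · have h2m : (2 * m + 1 : ℝ) ≤ (2 * K + 5) / ρ := by
      rw [le_div_iff₀ hρ₀]
      linarith
    calc (#(C.image φ) : ℝ) ≤ #C := mod_cast card_image_le
      _ ≤ (2 * m + 1) ^ Fintype.card ι := mod_cast hCcard
      _ ≤ ((2 * K + 5) / ρ) ^ Fintype.card ι := pow_le_pow_left₀ (by positivity) h2m _
      _ = _ := div_pow ..
  · rintro _ ⟨p, hp, rfl⟩
    obtain ⟨c, hc, hpc⟩ := mem_iUnion₂.1 (hC hp)
    refine mem_iUnion₂.2 ⟨φ c, mem_image_of_mem φ hc, ?_⟩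
    rw [mem_closedBall] at hpc ⊢
    calc dist (φ p) (φ c) ≤ K * dist p c := hφ.dist_le_mul p hp c (hCball hc)
      _ ≤ K * (1 / m) := by gcongr
      _ ≤ ρ := by rwa [mul_one_div, div_le_iff₀ hm, mul_comm]

end Covers

section Auerbach

open Set Module Submodule

theorem exists_linearIndependent_forall_abs_coeff_le_one {ι V : Type*} [Finite ι]
    [AddCommGroup V] [Module ℝ V] (v : ι → V) :
    ∃ s : Fin (finrank ℝ (span ℝ (range v))) → ι, LinearIndependent ℝ (v ∘ s) ∧
      ∀ j, ∃ c : Fin (finrank ℝ (span ℝ (range v))) → ℝ,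
        (∀ a, |c a| ≤ 1) ∧ ∑ a, c a • v (s a) = v j := by
  classical
  set U := span ℝ (range v)
  have : FiniteDimensional ℝ U := FiniteDimensional.span_of_finite ℝ (finite_range v)
  let w : ι → U := fun j => ⟨v j, subset_span (mem_range_self j)⟩
  have hw : span ℝ (range w) = ⊤ := by
    apply map_injective_of_injective U.injective_subtype
    rw [map_span, ← range_comp, map_subtype_top]
    rfl
  let b := Module.finBasis ℝ U
  have hbasis : ∃ s : Fin (finrank ℝ U) → ι, IsUnit (b.det (w ∘ s)) := by
    obtain ⟨κ, a, -, hsp, hli⟩ := exists_linearIndependent' ℝ w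
    let b₀ := Basis.mk hli (by rw [hsp, hw])
    let e := b₀.indexEquiv b
    refine ⟨a ∘ e.symm, ?_⟩
    have : w ∘ a ∘ e.symm = b₀.reindex e := by
      rw [Basis.coe_reindex, Basis.coe_mk]
      rfl
    rw [this]
    exact b.isUnit_det _
  obtain ⟨s₀, hs₀⟩ := hbasis
  have : Nonempty (Fin (finrank ℝ U) → ι) := ⟨s₀⟩
  obtain ⟨s, hs⟩ := Finite.exists_max fun s : Fin (finrank ℝ U) → ι => |b.det (w ∘ s)|
  have hdet : 0 < |b.det (w ∘ s)| :=
    (abs_pos.2 (isUnit_iff_ne_zero.1 hs₀)).trans_le (hs s₀)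
  obtain ⟨hli, hsp⟩ := b.is_basis_iff_det.2 (isUnit_iff_ne_zero.2 (abs_pos.1 hdet))
  let bs := Basis.mk hli hsp.ge
  refine ⟨s, hli.map' U.subtype U.ker_subtype,
    fun j => ⟨fun a => bs.coord a (w j), fun a => ?_, ?_⟩⟩
  · -- Cramer's rule: replacing `v (s a)` by `v j` multiplies the determinant by the `a`-th
    -- coordinate of `v j`, and the determinant at `s` is maximal.
    have hcramer := congrArg (· (w j)) (b.det_smul_mk_coord_eq_det_update hli hsp.ge a)
    simp only [LinearMap.smul_apply, smul_eq_mul, MultilinearMap.toLinearMap_apply,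
      AlternatingMap.coe_multilinearMap, ← comp_update] at hcramer
    have := hs (update s a j)
    rw [← hcramer, abs_mul] at this
    exact (mul_le_iff_le_one_right hdet).1 this
  · simpa [bs, Basis.coord_apply] using congrArg Subtype.val (bs.sum_repr (w j))

end Auerbach

theorem Matrix.norm_apply_le_frobenius_norm {m n α : Type*} [Fintype m] [Fintype n]
    [NormedAddCommGroup α] (A : Matrix m n α) (i : m) (j : n) : ‖A i j‖ ≤ ‖A‖ :=
  calc ‖A i j‖ ≤ ‖WithLp.toLp 2 (A i)‖ := PiLp.norm_apply_le (WithLp.toLp 2 (A i)) j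
    _ ≤ ‖WithLp.toLp 2 fun i => WithLp.toLp 2 (A i)‖ :=
      PiLp.norm_apply_le (β := fun _ => WithLp 2 (n → α))
        (WithLp.toLp 2 fun i => WithLp.toLp 2 (A i)) i
    _ = ‖A‖ := rfl

section Frobenius

attribute [local instance] Matrix.frobeniusNormedSpace

theorem exists_lipschitzOnWith_matrix_of_contDiff {m n E : Type*} [Fintype m] [Fintype n]
    [NormedAddCommGroup E] [NormedSpace ℝ E] [FiniteDimensional ℝ E]
    {F : E → m → n → ℝ} (hF : ContDiff ℝ 1 F) {S : Set E} (hS : IsCompact S) :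
    ∃ K, LipschitzOnWith K (fun x => Matrix.of (F x)) S := by
  obtain ⟨K, hK⟩ :=
    (hF.locallyLipschitz.locallyLipschitzOn (s := S)).exists_lipschitzOnWith_of_compact hS
  exact ⟨_, (Matrix.ofLinearEquiv ℝ).toLinearMap.toContinuousLinearMap.lipschitz
    |>.comp_lipschitzOnWith hK⟩

end Frobenius

section LowRank

open Matrix

variable {m n : Type*}

open Classical in
noncomputable def rowSupport [Fintype m] (X : Matrix m n ℝ) : Finset m := {i | ∃ j, X i j ≠ 0}

theorem mem_rowSupport [Fintype m] {X : Matrix m n ℝ} {i : m} :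
    i ∈ rowSupport X ↔ ∃ j, X i j ≠ 0 := by
  simp [rowSupport]

theorem eq_zero_of_notMem_rowSupport [Fintype m] {X : Matrix m n ℝ} {i : m}
    (hi : i ∉ rowSupport X) (j : n) : X i j = 0 := by
  by_contra h
  exact hi (mem_rowSupport.2 ⟨j, h⟩)

theorem card_rowSupport [Fintype m] (X : Matrix m n ℝ) :
    #(rowSupport X) = {i | ∃ j, X i j ≠ 0}.ncard := by
  rw [← Set.ncard_coe_finset]
  exact congrArg Set.ncard (Set.ext fun _ => mem_rowSupport)

variable [DecidableEq m] [DecidableEq n] {k : ℕ}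

/-- The matrix `C * W`, where `C` vanishes off the rows in `R`, and `W` has the unit vector `eₐ`
as its column `s a`, free entries in the columns of `J` outside the range of `s`, and zeros
elsewhere. -/
noncomputable def lowRankParam (R : Finset m) (J : Finset n) (s : Fin k → n)
    (p : (R × Fin k) ⊕ (Fin k × ↥(J \ univ.image s)) → ℝ) : Matrix m n ℝ :=
  (of fun i a => if h : i ∈ R then p (.inl (⟨i, h⟩, a)) else 0) *
    of fun a j =>
      if s a = j then 1 else if h : j ∈ J \ univ.image s then p (.inr (a, ⟨j, h⟩)) else 0

theorem exists_lipschitzOnWith_lowRankParam [Fintype m] [Fintype n] (R : Finset m) (J : Finset n)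
    (s : Fin k → n) :
    ∃ K, LipschitzOnWith K (lowRankParam R J s) (closedBall 0 1) := by
  refine exists_lipschitzOnWith_matrix_of_contDiff
    (F := fun p i j => lowRankParam R J s p i j) ?_ (isCompact_closedBall 0 1)
  simp only [lowRankParam, mul_apply, of_apply]
  refine contDiff_pi.2 fun i => contDiff_pi.2 fun j =>
    ContDiff.sum fun a _ => ContDiff.mul ?_ ?_
  · by_cases h : i ∈ R <;> simp only [h, dite_true, dite_false] <;> fun_prop
  · by_cases h : s a = j <;> simp only [h, if_true, if_false]
    · fun_prop
    by_cases h' : j ∈ J \ univ.image s <;> simp only [h', dite_true, dite_false] <;> fun_prop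

theorem hasPolyCovers_lowRankParam_image [Fintype m] [Fintype n] (R : Finset m) (J : Finset n)
    (s : Fin k → n) :
    HasPolyCovers (lowRankParam R J s '' closedBall 0 1) (#R * k + k * #(J \ univ.image s)) := by
  obtain ⟨K, hK⟩ := exists_lipschitzOnWith_lowRankParam R J s
  simpa only [Fintype.card_sum, Fintype.card_prod, Fintype.card_coe, Fintype.card_fin] using
    hK.hasPolyCovers_image_closedBall

theorem lowRankParam_sumElim_eq {X : Matrix m n ℝ} {R : Finset m} {J : Finset n}
    {s : Fin k → n} (hs : Injective s) (c : n → Fin k → ℝ)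
    (hc : ∀ i j, ∑ a, X i (s a) * c j a = X i j)
    (hR : ∀ i ∉ R, ∀ j, X i j = 0) (hJ : ∀ j ∉ J, ∀ i, X i j = 0) :
    lowRankParam R J s (Sum.elim (fun x => X x.1 (s x.2)) fun x => c x.2 x.1) = X := by
  have hC : (of fun i a => if h : i ∈ R then X i (s a) else 0) = of fun i a => X i (s a) := by
    ext i a
    by_cases hi : i ∈ R
    · exact dif_pos hi
    · exact (dif_neg hi).trans (hR i hi _).symm
  rw [lowRankParam]
  simp only [Sum.elim_inl, Sum.elim_inr, hC]
  ext i j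
  rw [mul_apply]
  by_cases hj : j ∈ univ.image s
  · have hj' : j ∉ J \ univ.image s := fun h => (mem_sdiff.1 h).2 hj
    obtain ⟨b, -, rfl⟩ := mem_image.1 hj
    simp only [of_apply, hj', dite_false, hs.eq_iff, mul_ite, mul_one, mul_zero,
      sum_ite_eq', mem_univ, if_true]
  have hne : ∀ a, s a ≠ j := fun a h => hj (mem_image.2 ⟨a, mem_univ _, h⟩)
  by_cases hjJ : j ∈ J
  · simp only [of_apply, hne, mem_sdiff.2 ⟨hjJ, hj⟩, if_false, dite_true]
    exact hc i j
  · simp only [of_apply, hne, mem_sdiff, hjJ, false_and, if_false, dite_false, mul_zero,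
      sum_const_zero]
    exact (hJ j hjJ i).symm

theorem exists_lowRankParam_eq [Fintype m] [Fintype n] (X : Matrix m n ℝ) (hX : ‖X‖ ≤ 1) :
    ∃ k ≤ X.rank, ∃ s : Fin k → n, Injective s ∧ univ.image s ⊆ rowSupport Xᵀ ∧
      ∃ p ∈ closedBall 0 1, lowRankParam (rowSupport X) (rowSupport Xᵀ) s p = X := by
  obtain ⟨s, hli, hc⟩ := exists_linearIndependent_forall_abs_coeff_le_one Xᵀ
  choose c hc1 hc2 using hc
  have hsJ : univ.image s ⊆ rowSupport Xᵀ := by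
    simp only [image_subset_iff, mem_univ, forall_const, mem_rowSupport]
    intro a
    by_contra h
    push Not at h
    exact hli.ne_zero a (funext h)
  refine ⟨_, X.rank_eq_finrank_span_cols.ge, s, hli.injective.of_comp, hsJ,
    Sum.elim (fun x => X x.1 (s x.2)) (fun x => c x.2 x.1), ?_,
    lowRankParam_sumElim_eq hli.injective.of_comp c (fun i j => ?_)
      (fun i hi => eq_zero_of_notMem_rowSupport hi)
      (fun j hj => eq_zero_of_notMem_rowSupport (X := Xᵀ) hj)⟩
  · rw [mem_closedBall, dist_zero_right, pi_norm_le_iff_of_nonneg zero_le_one]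
    rintro (⟨i, a⟩ | ⟨a, j⟩)
    · exact (X.norm_apply_le_frobenius_norm _ _).trans hX
    · simpa using hc1 j a
  · simpa [Finset.sum_apply, mul_comm] using congrFun (hc2 j) i

end LowRank

theorem mul_add_mul_tsub_le {a b k r s₁ s₂ : ℕ} (ha : a ≤ s₁) (hb : b ≤ s₂) (hk : k ≤ r)
    (h₁ : r ≤ s₁) (h₂ : r ≤ s₂) : a * k + k * (b - k) ≤ (s₁ + s₂ - r) * r := by
  calc a * k + k * (b - k) ≤ s₁ * k + k * (s₂ - k) := by gcongr
    _ ≤ (s₁ + s₂ - r) * r := by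
      zify [hk.trans h₂, (show r ≤ s₁ + s₂ by omega)]
      have : (0 : ℤ) ≤ (r - k) * (s₁ + s₂ - r - k) := by
        apply mul_nonneg <;> omega
      nlinarith

/-- upper Minkowski dimension of the set of rank-`≤ r` matrices with at most
`s₁` nonzero rows and `s₂` nonzero columns in the Frobenius unit ball. -/
theorem minkowski_sparse_lowrank {n₁ n₂ r s₁ s₂ : ℕ} (h₁ : r ≤ s₁) (h₂ : r ≤ s₂) :
    upperMinkowskiDim {X : Matrix (Fin n₁) (Fin n₂) ℝ | X.rank ≤ r ∧
        {i | ∃ j, X i j ≠ 0}.ncard ≤ s₁ ∧ {j | ∃ i, X i j ≠ 0}.ncard ≤ s₂ ∧ ‖X‖ ≤ 1}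
      ≤ ((s₁ : ℝ) + s₂ - r) * r := by
  have hD : ((s₁ : ℝ) + s₂ - r) * r = ((s₁ + s₂ - r) * r : ℕ) := by
    rw [Nat.cast_mul, Nat.cast_sub (by omega), Nat.cast_add]
  rw [hD]
  let pieces : Finset (Σ k : Fin (r + 1), Finset (Fin n₁) × Finset (Fin n₂) × (Fin k → Fin n₂)) :=
    {α | #α.2.1 ≤ s₁ ∧ #α.2.2.1 ≤ s₂ ∧ Injective α.2.2.2 ∧ univ.image α.2.2.2 ⊆ α.2.2.1}
  refine HasPolyCovers.upperMinkowskiDim_le <| (pieces.hasPolyCovers_biUnion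
    (Ω := fun α => lowRankParam α.2.1 α.2.2.1 α.2.2.2 '' closedBall 0 1)
    fun α hα => ?_).subset fun X hX => ?_
  · obtain ⟨⟨k, hk⟩, R, J, s⟩ := α
    obtain ⟨hR, hJ, hs, hsJ⟩ := (mem_filter.1 hα).2
    refine (hasPolyCovers_lowRankParam_image R J s).mono_exponent ?_
    rw [card_sdiff_of_subset hsJ, card_image_of_injective _ hs, card_univ, Fintype.card_fin]
    exact mul_add_mul_tsub_le hR hJ (by omega) h₁ h₂
  · obtain ⟨hrank, hrow, hcol, hX⟩ := hX
    obtain ⟨k, hk, s, hs, hsJ, p, hp, hpX⟩ := exists_lowRankParam_eq X hX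
    exact Set.mem_iUnion₂.2 ⟨⟨⟨k, by omega⟩, rowSupport X, rowSupport Xᵀ, s⟩,
      mem_filter.2 ⟨mem_univ _, (card_rowSupport X).trans_le hrow,
        (card_rowSupport Xᵀ).trans_le hcol, hs, hsJ⟩, p, hp, hpX⟩
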